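/- arXiv:1611.03671 — 3 statements merged into one kernel-verified Lean document; each statement's English description precedes it below -/
import Mathlib

section
/- Let G be a finite simple graph, let X and Y be disjoint sets of vertices of G, and let G''' be the graph obtained from G by the bipartite complementation with respect to X and Y. If k is the uniformicity of G and ℓ''' is the uniformicity of G''', then k/3 ≤ ℓ''' ≤ 3k. In particular, if G is k-uniform then G''' is 3k-uniform. -/
/-- The bipartite complementation of `G` with respect to disjoint vertex sets `X`, `Y`:
two distinct vertices are adjacent iff either one lies in `X` and the other in `Y` and
they were non-adjacent in `G`, or otherwise they were adjacent in `G`. -/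
def bipartiteComplement {V : Type} (G : SimpleGraph V) (X Y : Set V) : SimpleGraph V where
  Adj u v := u ≠ v ∧
    ((((u ∈ X ∧ v ∈ Y) ∨ (u ∈ Y ∧ v ∈ X)) ∧ ¬G.Adj u v) ∨
     (¬((u ∈ X ∧ v ∈ Y) ∨ (u ∈ Y ∧ v ∈ X)) ∧ G.Adj u v))
  symm := by
    constructor
    rintro u v ⟨h, h2⟩
    have hs : G.Adj u v ↔ G.Adj v u := ⟨fun h => h.symm, fun h => h.symm⟩
    exact ⟨h.symm, by tauto⟩
  loopless := ⟨fun u h => h.1 rfl⟩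

/-- `G` is `k`-uniform: there are a graph `F` on `Fin k` and a symmetric Boolean matrix
`K` such that `G` embeds as an induced subgraph into the graph `H(K)` on `Fin k × ℕ`,
in which two distinct vertices `(i,m)`, `(j,n)` are adjacent iff exactly one of the
following holds: (a) `m = n` and `i`, `j` are adjacent in `F`; (b) `K i j = true`. -/
def IsKUniform (k : ℕ) {V : Type} (G : SimpleGraph V) : Prop :=
  ∃ (F : SimpleGraph (Fin k)) (K : Fin k → Fin k → Bool),
    (∀ i j, K i j = K j i) ∧
    ∃ f : V → Fin k × ℕ, Function.Injective f ∧
      ∀ u v : V, G.Adj u v ↔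
        (f u ≠ f v ∧
          Xor' ((f u).2 = (f v).2 ∧ F.Adj (f u).1 (f v).1) (K (f u).1 (f v).1 = true))

lemma bc_involutive {V : Type} (G : SimpleGraph V) (X Y : Set V) :
    bipartiteComplement (bipartiteComplement G X Y) X Y = G := by
  ext u v
  have hne : G.Adj u v → u ≠ v := G.ne_of_adj
  simp only [bipartiteComplement]
  tauto

lemma card_uniform {V : Type} [Fintype V] (G : SimpleGraph V) :
    IsKUniform (Fintype.card V) G := by
  classical
  let e := Fintype.equivFin V
  refine ⟨⟨fun i j => G.Adj (e.symm i) (e.symm j), ⟨fun i j h => h.symm⟩, ⟨fun i h => G.irrefl h⟩⟩,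
    fun _ _ => false, fun _ _ => rfl, fun v => (e v, 0), ?_, ?_⟩
  · intro u v h
    have := congrArg Prod.fst h
    simpa using e.injective this
  · intro u v
    constructor
    · intro h
      refine ⟨?_, Or.inl ⟨⟨rfl, by simpa using h⟩, by simp⟩⟩
      have := G.ne_of_adj h
      simp [Prod.ext_iff, e.injective.ne_iff, this]
    · rintro ⟨hne, h⟩
      rcases h with ⟨⟨-, h⟩, -⟩ | ⟨h, -⟩
      · simpa using h
      · simp at h

lemma xor_lemma (A B C : Prop) :
    ((C ∧ ¬ Xor' A B) ∨ (¬C ∧ Xor' A B)) ↔ Xor' A (Xor' B C) := by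
  unfold Xor' Xor
  tauto

set_option maxHeartbeats 1000000 in
lemma step_uniform {V : Type} (G : SimpleGraph V) (X Y : Set V) (hdisj : Disjoint X Y)
    (m : ℕ) (h : IsKUniform m G) :
    IsKUniform (3 * m) (bipartiteComplement G X Y) := by
  classical
  obtain ⟨F, K, hKsym, f, hfinj, hfadj⟩ := h
  let part : V → Fin 3 := fun v => if v ∈ X then 1 else if v ∈ Y then 2 else 0
  have hpart : ∀ v, part v = if v ∈ X then 1 else if v ∈ Y then 2 else 0 := fun _ => rfl
  have hpX : ∀ v, v ∈ X ↔ part v = 1 := by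
    intro v
    rw [hpart]
    split_ifs with h1 h2
    · exact iff_of_true h1 rfl
    · exact iff_of_false h1 (by decide)
    · exact iff_of_false h1 (by decide)
  have hpY : ∀ v, v ∈ Y ↔ part v = 2 := by
    intro v
    rw [hpart]
    split_ifs with h1 h2
    · exact iff_of_false (fun h => hdisj.ne_of_mem h1 h rfl) (by decide)
    · exact iff_of_true h2 rfl
    · exact iff_of_false h2 (by decide)
  let e : Fin m × Fin 3 ≃ Fin (3 * m) := finProdFinEquiv.trans (finCongr (Nat.mul_comm m 3))
  let crossB : Fin 3 → Fin 3 → Bool := fun p q => (p == 1 && q == 2) || (p == 2 && q == 1)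
  have hcs : ∀ p q : Fin 3, crossB p q = crossB q p := by decide
  refine ⟨⟨fun a b => F.Adj (e.symm a).1 (e.symm b).1, ⟨fun a b h => h.symm⟩,
      ⟨fun a h => F.irrefl h⟩⟩,
    fun a b => xor (K (e.symm a).1 (e.symm b).1) (crossB (e.symm a).2 (e.symm b).2),
    ?_, fun v => (e ((f v).1, part v), (f v).2), ?_, ?_⟩
  · intro a b
    simp only [hKsym (e.symm a).1 (e.symm b).1, hcs (e.symm a).2 (e.symm b).2]
  · intro u v h
    simp only [Prod.mk.injEq, e.injective.eq_iff] at h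
    exact hfinj (Prod.ext h.1.1 h.2)
  · intro u v
    simp only [bipartiteComplement, Equiv.symm_apply_apply]
    have hC : ((u ∈ X ∧ v ∈ Y) ∨ (u ∈ Y ∧ v ∈ X)) ↔ crossB (part u) (part v) = true := by
      simp only [crossB, hpX, hpY, Bool.or_eq_true, Bool.and_eq_true, beq_iff_eq]
    have hxor : ∀ b c : Bool, (xor b c = true) ↔ Xor' (b = true) (c = true) := by
      intro b c; cases b <;> cases c <;> simp [Xor', Xor]
    have hgne : (e ((f u).1, part u), (f u).2) ≠ (e ((f v).1, part v), (f v).2) ↔ u ≠ v := by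
      constructor
      · intro h hz; exact h (by rw [hz])
      · intro h hz
        simp only [Prod.mk.injEq, e.injective.eq_iff] at hz
        exact h (hfinj (Prod.ext hz.1.1 hz.2))
    rw [hxor, hgne]
    apply and_congr_right
    intro hne
    have hfne : f u ≠ f v := fun h => hne (hfinj h)
    have hG : G.Adj u v ↔ Xor' ((f u).2 = (f v).2 ∧ F.Adj (f u).1 (f v).1)
        (K (f u).1 (f v).1 = true) := (hfadj u v).trans (and_iff_right hfne)
    rw [hC, hG]
    exact xor_lemma _ _ _

/-- If `k` is the uniformicity of a finite graph `G` and `ℓ'''` is the uniformicity of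
the graph `G'''` obtained from `G` by a bipartite complementation with respect to
disjoint vertex sets `X`, `Y`, then `k/3 ≤ ℓ''' ≤ 3k`; in particular, if `G` is
`m`-uniform then `G'''` is `3m`-uniform. -/
theorem uniformicity_bipartiteComplement
    {V : Type} [Fintype V] (G : SimpleGraph V) (X Y : Set V)
    (hdisj : Disjoint X Y)
    (k l''' : ℕ)
    (hk : k = sInf {m : ℕ | IsKUniform m G})
    (hl : l''' = sInf {m : ℕ | IsKUniform m (bipartiteComplement G X Y)}) :
    (k ≤ 3 * l''' ∧ l''' ≤ 3 * k) ∧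
    ∀ m : ℕ, IsKUniform m G → IsKUniform (3 * m) (bipartiteComplement G X Y) := by
  have hGne : {m : ℕ | IsKUniform m G}.Nonempty := ⟨_, card_uniform G⟩
  have hG'ne : {m : ℕ | IsKUniform m (bipartiteComplement G X Y)}.Nonempty :=
    ⟨_, card_uniform _⟩
  have hkmem : IsKUniform k G := hk ▸ Nat.sInf_mem hGne
  have hlmem : IsKUniform l''' (bipartiteComplement G X Y) := hl ▸ Nat.sInf_mem hG'ne
  refine ⟨⟨?_, ?_⟩, fun m hm => step_uniform G X Y hdisj m hm⟩
  · have h1 : IsKUniform (3 * l''') G := by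
      have := step_uniform (bipartiteComplement G X Y) X Y hdisj l''' hlmem
      rwa [bc_involutive] at this
    exact hk ▸ Nat.sInf_le h1
  · have h2 : IsKUniform (3 * k) (bipartiteComplement G X Y) :=
      step_uniform G X Y hdisj k hkmem
    exact hl ▸ Nat.sInf_le h2
end

section
/- For every integer n ≥ 3, the graph H_{4n} contains no induced subgraph isomorphic to the gem; that is, H_{4n} is gem-free. -/
/-- The gem: a path `0 – 1 – 2 – 3` on four vertices together with a fifth vertex `4`
adjacent to all of them (the complement of `P₁ + P₄`). -/
def gem : SimpleGraph (Fin 5) where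
  Adj u v := u ≠ v ∧ (u = 4 ∨ v = 4 ∨ u.val + 1 = v.val ∨ v.val + 1 = u.val)
  symm := ⟨by intro u v; revert u v; decide⟩
  loopless := ⟨by intro u; revert u; decide⟩

/-- The residue modulo `4` of an element of `ZMod (4 * n)`. -/
def res4 (n : ℕ) (u : ZMod (4 * n)) : ZMod 4 :=
  ZMod.castHom (dvd_mul_right 4 n) (ZMod 4) u

/-- `u` lies in the set `X`: its residue modulo `4` is `0` or `1`. -/
def memX (n : ℕ) (u : ZMod (4 * n)) : Prop := res4 n u = 0 ∨ res4 n u = 1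

/-- `u` lies in the set `Y`: its residue modulo `4` is `2` or `3`. -/
def memY (n : ℕ) (u : ZMod (4 * n)) : Prop := res4 n u = 2 ∨ res4 n u = 3

/-- `u` and `v` are consecutive on the cycle `C_{4n}`. -/
def cycAdj (n : ℕ) (u v : ZMod (4 * n)) : Prop := v = u + 1 ∨ u = v + 1

/-- The graph `H_{4n}` on vertex set `ZMod (4n)`, obtained from the cycle `C_{4n}`
by complementing the subgraph induced by `X = {u : u ≡ 0 or 1 (mod 4)}` and
complementing the subgraph induced by `Y = {u : u ≡ 2 or 3 (mod 4)}`: two distinct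
vertices `u`, `v` are adjacent iff either both lie in `X` or both in `Y` and they are
not cycle-adjacent, or one lies in `X` and the other in `Y` and they are
cycle-adjacent. -/
def H4 (n : ℕ) : SimpleGraph (ZMod (4 * n)) where
  Adj u v := u ≠ v ∧
    ((((memX n u ∧ memX n v) ∨ (memY n u ∧ memY n v)) ∧ ¬cycAdj n u v) ∨
     (((memX n u ∧ memY n v) ∨ (memY n u ∧ memX n v)) ∧ cycAdj n u v))
  symm := by
    constructor
    rintro u v ⟨h, h2⟩
    have hc : cycAdj n u v ↔ cycAdj n v u := by unfold cycAdj; tauto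
    exact ⟨h.symm, by tauto⟩
  loopless := ⟨fun u h => h.1 rfl⟩

lemma res4_add_one (n : ℕ) (u : ZMod (4 * n)) : res4 n (u + 1) = res4 n u + 1 := by
  simp [res4, map_add, map_one]

lemma res4_sub_one (n : ℕ) (u : ZMod (4 * n)) : res4 n (u - 1) = res4 n u - 1 := by
  simp [res4, map_sub, map_one]

lemma memY_iff_not_memX (n : ℕ) (u : ZMod (4 * n)) : memY n u ↔ ¬ memX n u := by
  unfold memX memY
  generalize res4 n u = r
  revert r; decide

lemma memX_add_one_iff (n : ℕ) (u : ZMod (4 * n)) :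
    memX n (u + 1) ↔ ¬ memX n (u - 1) := by
  unfold memX
  rw [res4_add_one, res4_sub_one]
  generalize res4 n u = r
  revert r; decide

lemma cyc_unique (n : ℕ) (u v w : ZMod (4 * n)) (h1 : cycAdj n u v) (h2 : cycAdj n u w)
    (h : memX n v ↔ memX n w) : v = w := by
  have hv : v = u + 1 ∨ v = u - 1 := by
    rcases h1 with h1 | h1
    · exact Or.inl h1
    · right; rw [h1]; ring
  have hw : w = u + 1 ∨ w = u - 1 := by
    rcases h2 with h2 | h2
    · exact Or.inl h2
    · right; rw [h2]; ring
  have key := memX_add_one_iff n u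
  rcases hv with hv | hv <;> rcases hw with hw | hw <;> subst hv <;> subst hw <;> tauto

lemma adj_cyc (n : ℕ) (u v : ZMod (4 * n)) (h : (H4 n).Adj u v)
    (hd : ¬ (memX n u ↔ memX n v)) : cycAdj n u v := by
  have hu := memY_iff_not_memX n u
  have hv := memY_iff_not_memX n v
  rcases h.2 with ⟨hcls, _⟩ | ⟨_, hc⟩
  · tauto
  · exact hc

lemma nonadj_cyc (n : ℕ) (u v : ZMod (4 * n)) (hne : u ≠ v) (h : ¬ (H4 n).Adj u v)
    (hs : memX n u ↔ memX n v) : cycAdj n u v := by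
  by_contra hc
  have hu := memY_iff_not_memX n u
  have hv := memY_iff_not_memX n v
  exact h ⟨hne, Or.inl ⟨by tauto, hc⟩⟩

instance : DecidableRel gem.Adj :=
  fun u v => inferInstanceAs
    (Decidable (u ≠ v ∧ (u = 4 ∨ v = 4 ∨ u.val + 1 = v.val ∨ v.val + 1 = u.val)))

set_option maxHeartbeats 1000000 in
/-- For every `n ≥ 3`, the graph `H_{4n}` is gem-free. -/
theorem H4_gem_free (n : ℕ) (hn : 3 ≤ n) : IsEmpty (gem ↪g H4 n) := by
  constructor
  intro f
  have hinj : ∀ i j : Fin 5, i ≠ j → f i ≠ f j := fun i j hij h => hij (f.injective h)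
  have Eab : (H4 n).Adj (f 0) (f 1) := f.map_adj_iff.2 (by decide)
  have Ebc : (H4 n).Adj (f 1) (f 2) := f.map_adj_iff.2 (by decide)
  have Ecd : (H4 n).Adj (f 2) (f 3) := f.map_adj_iff.2 (by decide)
  have Eea : (H4 n).Adj (f 4) (f 0) := f.map_adj_iff.2 (by decide)
  have Eeb : (H4 n).Adj (f 4) (f 1) := f.map_adj_iff.2 (by decide)
  have Eec : (H4 n).Adj (f 4) (f 2) := f.map_adj_iff.2 (by decide)
  have Eed : (H4 n).Adj (f 4) (f 3) := f.map_adj_iff.2 (by decide)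
  have Nac : ¬ (H4 n).Adj (f 0) (f 2) := fun h => by
    have := f.map_adj_iff.1 h; revert this; decide
  have Nad : ¬ (H4 n).Adj (f 0) (f 3) := fun h => by
    have := f.map_adj_iff.1 h; revert this; decide
  by_cases h0 : memX n (f 0) <;> by_cases h1 : memX n (f 1) <;>
    by_cases h2 : memX n (f 2) <;> by_cases h3 : memX n (f 3) <;>
    by_cases h4 : memX n (f 4) <;>
  first
  | exact hinj 0 1 (by decide)
      (cyc_unique n _ _ _ (adj_cyc n _ _ Eea (by itauto)) (adj_cyc n _ _ Eeb (by itauto)) (by itauto))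
  | exact hinj 0 2 (by decide)
      (cyc_unique n _ _ _ (adj_cyc n _ _ Eea (by itauto)) (adj_cyc n _ _ Eec (by itauto)) (by itauto))
  | exact hinj 0 3 (by decide)
      (cyc_unique n _ _ _ (adj_cyc n _ _ Eea (by itauto)) (adj_cyc n _ _ Eed (by itauto)) (by itauto))
  | exact hinj 1 2 (by decide)
      (cyc_unique n _ _ _ (adj_cyc n _ _ Eeb (by itauto)) (adj_cyc n _ _ Eec (by itauto)) (by itauto))
  | exact hinj 1 3 (by decide)
      (cyc_unique n _ _ _ (adj_cyc n _ _ Eeb (by itauto)) (adj_cyc n _ _ Eed (by itauto)) (by itauto))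
  | exact hinj 2 3 (by decide)
      (cyc_unique n _ _ _ (adj_cyc n _ _ Eec (by itauto)) (adj_cyc n _ _ Eed (by itauto)) (by itauto))
  | exact hinj 1 4 (by decide)
      (cyc_unique n _ _ _ (adj_cyc n _ _ Eab (by itauto)) (adj_cyc n _ _ Eea.symm (by itauto)) (by itauto))
  | exact hinj 0 2 (by decide)
      (cyc_unique n _ _ _ (adj_cyc n _ _ Eab.symm (by itauto)) (adj_cyc n _ _ Ebc (by itauto)) (by itauto))
  | exact hinj 1 3 (by decide)
      (cyc_unique n _ _ _ (adj_cyc n _ _ Ebc.symm (by itauto)) (adj_cyc n _ _ Ecd (by itauto)) (by itauto))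
  | exact hinj 2 4 (by decide)
      (cyc_unique n _ _ _ (adj_cyc n _ _ Ecd.symm (by itauto)) (adj_cyc n _ _ Eed.symm (by itauto)) (by itauto))
  | exact hinj 2 3 (by decide)
      (cyc_unique n _ _ _ (nonadj_cyc n _ _ (hinj 0 2 (by decide)) Nac (by itauto))
        (nonadj_cyc n _ _ (hinj 0 3 (by decide)) Nad (by itauto)) (by itauto))
end

section
/- For all integers n and m with 3 ≤ n, 3 ≤ m and n ≠ m, the graph H_{4n} is not an induced subgraph of H_{4m}; in other words, the graphs {H_{4n} : n ≥ 3} form an infinite antichain with respect to the induced subgraph relation. -/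
namespace H4Aux

lemma res_cases (r : ZMod 4) : r = 0 ∨ r = 1 ∨ r = 2 ∨ r = 3 := by revert r; decide

variable {n : ℕ}

lemma res4_add (u v : ZMod (4*n)) : res4 n (u + v) = res4 n u + res4 n v := map_add _ u v
lemma res4_sub (u v : ZMod (4*n)) : res4 n (u - v) = res4 n u - res4 n v := map_sub _ u v
lemma res4_one : res4 n (1 : ZMod (4*n)) = 1 := map_one _
lemma res4_zero : res4 n (0 : ZMod (4*n)) = 0 := map_zero _
lemma res4_natCast (k : ℕ) : res4 n ((k : ℕ) : ZMod (4*n)) = (k : ZMod 4) := map_natCast _ k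
lemma res4_two : res4 n (2 : ZMod (4*n)) = 2 := by
  have h : (2 : ZMod (4*n)) = 1 + 1 := by norm_num
  rw [h, res4_add, res4_one]; decide

/-- The partner (unique same-side non-neighbor) of `u`. -/
def pp (n : ℕ) (u : ZMod (4*n)) : ZMod (4*n) :=
  if res4 n u = 0 ∨ res4 n u = 2 then u + 1 else u - 1

/-- The unique cross-side neighbor of `u`. -/
def cc (n : ℕ) (u : ZMod (4*n)) : ZMod (4*n) :=
  if res4 n u = 1 ∨ res4 n u = 3 then u + 1 else u - 1

/-- `u` and `v` lie on the same side. -/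
def SS (n : ℕ) (u v : ZMod (4*n)) : Prop :=
  (memX n u ∧ memX n v) ∨ (memY n u ∧ memY n v)

lemma memX_iff (u : ZMod (4*n)) : memX n u ↔ ¬ memY n u := by
  have := res_cases (res4 n u)
  unfold memX memY
  constructor
  · rintro (h | h) (h' | h') <;> rw [h] at h' <;> exact absurd h' (by decide)
  · intro h; rcases this with h' | h' | h' | h' <;> tauto

lemma memX_or_memY (u : ZMod (4*n)) : memX n u ∨ memY n u := by
  have := res_cases (res4 n u); unfold memX memY; tauto

lemma SS_refl (u : ZMod (4*n)) : SS n u u := by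
  rcases memX_or_memY u with h | h
  · exact Or.inl ⟨h, h⟩
  · exact Or.inr ⟨h, h⟩

lemma SS_symm {u v : ZMod (4*n)} (h : SS n u v) : SS n v u := by
  unfold SS at *; tauto

lemma SS_trans {u v w : ZMod (4*n)} (h : SS n u v) (h' : SS n v w) : SS n u w := by
  have := memX_iff (n := n) v
  unfold SS at *; tauto

lemma not_SS {u v : ZMod (4*n)} (h : ¬ SS n u v) :
    (memX n u ∧ memY n v) ∨ (memY n u ∧ memX n v) := by
  have h1 := memX_or_memY (n := n) u
  have h2 := memX_or_memY (n := n) v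
  unfold SS at h; tauto

lemma crossSS {u v : ZMod (4*n)}
    (h : (memX n u ∧ memY n v) ∨ (memY n u ∧ memX n v)) : ¬ SS n u v := by
  have h1 := memX_iff (n := n) u
  have h2 := memX_iff (n := n) v
  unfold SS; tauto

lemma memX_res0 {u : ZMod (4*n)} (h : res4 n u = 0) : memX n u := Or.inl h
lemma memX_res1 {u : ZMod (4*n)} (h : res4 n u = 1) : memX n u := Or.inr h
lemma memY_res2 {u : ZMod (4*n)} (h : res4 n u = 2) : memY n u := Or.inl h
lemma memY_res3 {u : ZMod (4*n)} (h : res4 n u = 3) : memY n u := Or.inr h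

lemma memX_not23 {u : ZMod (4*n)} (h : memX n u) :
    res4 n u ≠ 2 ∧ res4 n u ≠ 3 := by
  rcases h with h | h <;> rw [h] <;> exact ⟨by decide, by decide⟩

lemma memY_not01 {u : ZMod (4*n)} (h : memY n u) :
    res4 n u ≠ 0 ∧ res4 n u ≠ 1 := by
  rcases h with h | h <;> rw [h] <;> exact ⟨by decide, by decide⟩

lemma SS_memX {u v : ZMod (4*n)} (hS : SS n u v) (h : memX n u) : memX n v := by
  rcases hS with ⟨_, h2⟩ | ⟨h1, _⟩
  · exact h2
  · exact absurd h1 ((memX_iff u).mp h)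

lemma SS_memY {u v : ZMod (4*n)} (hS : SS n u v) (h : memY n u) : memY n v := by
  rcases hS with ⟨h1, _⟩ | ⟨_, h2⟩
  · exact absurd h ((memX_iff u).mp h1)
  · exact h2

/-! ### cases of `pp`, `cc` -/

lemma res4_pp (u : ZMod (4*n)) :
    (res4 n u = 0 ∧ pp n u = u + 1) ∨ (res4 n u = 1 ∧ pp n u = u - 1) ∨
    (res4 n u = 2 ∧ pp n u = u + 1) ∨ (res4 n u = 3 ∧ pp n u = u - 1) := by
  rcases res_cases (res4 n u) with h | h | h | h
  · exact Or.inl ⟨h, by unfold pp; rw [if_pos (Or.inl h)]⟩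
  · refine Or.inr (Or.inl ⟨h, ?_⟩); unfold pp
    rw [if_neg (by rw [h]; decide)]
  · refine Or.inr (Or.inr (Or.inl ⟨h, ?_⟩)); unfold pp
    rw [if_pos (Or.inr h)]
  · refine Or.inr (Or.inr (Or.inr ⟨h, ?_⟩)); unfold pp
    rw [if_neg (by rw [h]; decide)]

lemma res4_cc (u : ZMod (4*n)) :
    (res4 n u = 0 ∧ cc n u = u - 1) ∨ (res4 n u = 1 ∧ cc n u = u + 1) ∨
    (res4 n u = 2 ∧ cc n u = u - 1) ∨ (res4 n u = 3 ∧ cc n u = u + 1) := by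
  rcases res_cases (res4 n u) with h | h | h | h
  · exact Or.inl ⟨h, by unfold cc; rw [if_neg (by rw [h]; decide)]⟩
  · exact Or.inr (Or.inl ⟨h, by unfold cc; rw [if_pos (Or.inl h)]⟩)
  · exact Or.inr (Or.inr (Or.inl ⟨h, by unfold cc; rw [if_neg (by rw [h]; decide)]⟩))
  · exact Or.inr (Or.inr (Or.inr ⟨h, by unfold cc; rw [if_pos (Or.inr h)]⟩))

lemma res4_add_one (u : ZMod (4*n)) : res4 n (u + 1) = res4 n u + 1 := by
  rw [res4_add, res4_one]

lemma res4_sub_one (u : ZMod (4*n)) : res4 n (u - 1) = res4 n u - 1 := by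
  rw [res4_sub, res4_one]

lemma SS_pp (u : ZMod (4*n)) : SS n u (pp n u) := by
  rcases res4_pp u with ⟨h, h'⟩ | ⟨h, h'⟩ | ⟨h, h'⟩ | ⟨h, h'⟩ <;> rw [h']
  · exact Or.inl ⟨memX_res0 h, memX_res1 (by rw [res4_add_one, h]; decide)⟩
  · exact Or.inl ⟨memX_res1 h, memX_res0 (by rw [res4_sub_one, h]; decide)⟩
  · exact Or.inr ⟨memY_res2 h, memY_res3 (by rw [res4_add_one, h]; decide)⟩
  · exact Or.inr ⟨memY_res3 h, memY_res2 (by rw [res4_sub_one, h]; decide)⟩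

lemma not_SS_cc (u : ZMod (4*n)) : ¬ SS n u (cc n u) := by
  apply crossSS
  rcases res4_cc u with ⟨h, h'⟩ | ⟨h, h'⟩ | ⟨h, h'⟩ | ⟨h, h'⟩ <;> rw [h']
  · exact Or.inl ⟨memX_res0 h, memY_res3 (by rw [res4_sub_one, h]; decide)⟩
  · exact Or.inl ⟨memX_res1 h, memY_res2 (by rw [res4_add_one, h]; decide)⟩
  · exact Or.inr ⟨memY_res2 h, memX_res1 (by rw [res4_sub_one, h]; decide)⟩
  · exact Or.inr ⟨memY_res3 h, memX_res0 (by rw [res4_add_one, h]; decide)⟩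

lemma cc_cc (u : ZMod (4*n)) : cc n (cc n u) = u := by
  rcases res4_cc u with ⟨h, h'⟩ | ⟨h, h'⟩ | ⟨h, h'⟩ | ⟨h, h'⟩ <;> rw [h']
  · have h1 : res4 n (u - 1) = 3 := by rw [res4_sub_one, h]; decide
    unfold cc; rw [if_pos (Or.inr h1)]; ring
  · have h1 : res4 n (u + 1) = 2 := by rw [res4_add_one, h]; decide
    unfold cc; rw [if_neg (by rw [h1]; decide)]; ring
  · have h1 : res4 n (u - 1) = 1 := by rw [res4_sub_one, h]; decide
    unfold cc; rw [if_pos (Or.inl h1)]; ring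
  · have h1 : res4 n (u + 1) = 0 := by rw [res4_add_one, h]; decide
    unfold cc; rw [if_neg (by rw [h1]; decide)]; ring

/-! ### small nonzero elements -/

section Size
variable (hn : 3 ≤ n)
include hn

lemma natCast_ne_zero {k : ℕ} (h0 : 0 < k) (h12 : k < 12) : ((k : ℕ) : ZMod (4*n)) ≠ 0 := by
  haveI : NeZero (4*n) := ⟨by omega⟩
  intro h
  rw [ZMod.natCast_eq_zero_iff] at h
  have := Nat.le_of_dvd h0 h
  omega

lemma diff_ne {a b : ZMod (4*n)} (k : ℕ) (h0 : 0 < k) (h12 : k < 12)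
    (hk : a - b = ((k : ℕ) : ZMod (4*n))) : a ≠ b := by
  intro h
  apply natCast_ne_zero hn h0 h12
  rw [← hk, h, sub_self]

lemma pp_ne (u : ZMod (4*n)) : pp n u ≠ u := by
  rcases res4_pp u with ⟨_, h'⟩ | ⟨_, h'⟩ | ⟨_, h'⟩ | ⟨_, h'⟩ <;> rw [h']
  · exact diff_ne hn 1 one_pos (by norm_num) (by push_cast; ring)
  · exact (diff_ne hn 1 one_pos (by norm_num) (by push_cast; ring) : u ≠ u - 1).symm
  · exact diff_ne hn 1 one_pos (by norm_num) (by push_cast; ring)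
  · exact (diff_ne hn 1 one_pos (by norm_num) (by push_cast; ring) : u ≠ u - 1).symm

lemma cc_ne (u : ZMod (4*n)) : cc n u ≠ u := by
  rcases res4_cc u with ⟨_, h'⟩ | ⟨_, h'⟩ | ⟨_, h'⟩ | ⟨_, h'⟩ <;> rw [h']
  · exact (diff_ne hn 1 one_pos (by norm_num) (by push_cast; ring) : u ≠ u - 1).symm
  · exact diff_ne hn 1 one_pos (by norm_num) (by push_cast; ring)
  · exact (diff_ne hn 1 one_pos (by norm_num) (by push_cast; ring) : u ≠ u - 1).symm
  · exact diff_ne hn 1 one_pos (by norm_num) (by push_cast; ring)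

end Size

/-! ### adjacency characterizations -/

lemma H4_adj (u v : ZMod (4*n)) : (H4 n).Adj u v ↔ (u ≠ v ∧
    ((((memX n u ∧ memX n v) ∨ (memY n u ∧ memY n v)) ∧ ¬cycAdj n u v) ∨
     (((memX n u ∧ memY n v) ∨ (memY n u ∧ memX n v)) ∧ cycAdj n u v))) := Iff.rfl

lemma cycAdj_iff (u v : ZMod (4*n)) : cycAdj n u v ↔ (v = u + 1 ∨ v = u - 1) := by
  unfold cycAdj
  constructor
  · rintro (h | h)
    · exact Or.inl h
    · right; rw [h]; ring
  · rintro (h | h)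
    · exact Or.inl h
    · right; rw [h]; ring

lemma cyc_same {u v : ZMod (4*n)} (hS : SS n u v) : cycAdj n u v ↔ v = pp n u := by
  rw [cycAdj_iff]
  constructor
  · rintro (hv | hv) <;>
      rcases res4_pp u with ⟨h, h'⟩ | ⟨h, h'⟩ | ⟨h, h'⟩ | ⟨h, h'⟩ <;> rw [h']
    · exact hv
    · exfalso
      have hXv : memX n v := SS_memX hS (memX_res1 h)
      exact (memX_not23 hXv).1 (by rw [hv, res4_add_one, h]; decide)
    · exact hv
    · exfalso
      have hYv : memY n v := SS_memY hS (memY_res3 h)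
      exact (memY_not01 hYv).1 (by rw [hv, res4_add_one, h]; decide)
    · exfalso
      have hXv : memX n v := SS_memX hS (memX_res0 h)
      exact (memX_not23 hXv).2 (by rw [hv, res4_sub_one, h]; decide)
    · exact hv
    · exfalso
      have hYv : memY n v := SS_memY hS (memY_res2 h)
      exact (memY_not01 hYv).2 (by rw [hv, res4_sub_one, h]; decide)
    · exact hv
  · intro hv
    rcases res4_pp u with ⟨h, h'⟩ | ⟨h, h'⟩ | ⟨h, h'⟩ | ⟨h, h'⟩ <;> rw [h'] at hv
    · exact Or.inl hv
    · exact Or.inr hv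
    · exact Or.inl hv
    · exact Or.inr hv

lemma cyc_cross {u v : ZMod (4*n)} (hS : ¬ SS n u v) : cycAdj n u v ↔ v = cc n u := by
  rw [cycAdj_iff]
  constructor
  · rintro (hv | hv) <;>
      rcases res4_cc u with ⟨h, h'⟩ | ⟨h, h'⟩ | ⟨h, h'⟩ | ⟨h, h'⟩ <;> rw [h']
    · exfalso
      exact hS (Or.inl ⟨memX_res0 h, memX_res1 (by rw [hv, res4_add_one, h]; decide)⟩)
    · exact hv
    · exfalso
      exact hS (Or.inr ⟨memY_res2 h, memY_res3 (by rw [hv, res4_add_one, h]; decide)⟩)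
    · exact hv
    · exact hv
    · exfalso
      exact hS (Or.inl ⟨memX_res1 h, memX_res0 (by rw [hv, res4_sub_one, h]; decide)⟩)
    · exact hv
    · exfalso
      exact hS (Or.inr ⟨memY_res3 h, memY_res2 (by rw [hv, res4_sub_one, h]; decide)⟩)
  · intro hv
    rcases res4_cc u with ⟨h, h'⟩ | ⟨h, h'⟩ | ⟨h, h'⟩ | ⟨h, h'⟩ <;> rw [h'] at hv
    · exact Or.inr hv
    · exact Or.inl hv
    · exact Or.inr hv
    · exact Or.inl hv

/-- Characterization of same-side adjacency. -/
lemma adj_same {u v : ZMod (4*n)} (hS : SS n u v) (hne : u ≠ v) :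
    (H4 n).Adj u v ↔ v ≠ pp n u := by
  rw [H4_adj]
  have hcyc := cyc_same hS
  have hcr : ¬ ((memX n u ∧ memY n v) ∨ (memY n u ∧ memX n v)) := by
    have h1 := memX_iff (n := n) u
    have h2 := memX_iff (n := n) v
    unfold SS at hS; tauto
  constructor
  · rintro ⟨-, (⟨-, hc⟩ | ⟨hx, -⟩)⟩
    · exact fun h => hc (hcyc.mpr h)
    · exact absurd hx hcr
  · intro hv
    exact ⟨hne, Or.inl ⟨hS, fun hc => hv (hcyc.mp hc)⟩⟩

/-- Characterization of cross-side adjacency. -/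
lemma adj_cross {u v : ZMod (4*n)} (hS : ¬ SS n u v) :
    (H4 n).Adj u v ↔ v = cc n u := by
  rw [H4_adj]
  have hne : u ≠ v := fun h => hS (h ▸ SS_refl u)
  have hcyc := cyc_cross hS
  constructor
  · rintro ⟨-, (⟨hx, -⟩ | ⟨-, hc⟩)⟩
    · exact absurd hx hS
    · exact hcyc.mp hc
  · intro hv
    exact ⟨hne, Or.inr ⟨not_SS hS, hcyc.mpr hv⟩⟩

lemma same_nonadj {u v : ZMod (4*n)} (hS : SS n u v) (hne : u ≠ v)
    (hna : ¬ (H4 n).Adj u v) : v = pp n u := by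
  by_contra h
  exact hna ((adj_same hS hne).mpr h)

/-- A cross edge lies in no triangle. -/
lemma cross_no_triangle {u v w : ZMod (4*n)} (hS : ¬ SS n u v)
    (huv : (H4 n).Adj u v) (huw : (H4 n).Adj u w) (hvw : (H4 n).Adj v w) : False := by
  have hvc : v = cc n u := (adj_cross hS).mp huv
  by_cases hw : SS n u w
  · have hS' : ¬ SS n v w := fun h => hS (SS_trans hw (SS_symm h))
    have hwc : w = cc n v := (adj_cross hS').mp hvw
    rw [hvc, cc_cc] at hwc
    exact (H4 n).loopless.irrefl u (hwc ▸ huw)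
  · have hwc : w = cc n u := (adj_cross hw).mp huw
    rw [← hvc] at hwc
    exact (H4 n).loopless.irrefl v (hwc ▸ hvw)

end H4Aux

namespace H4Aux

variable {n : ℕ}

lemma res4_add_nat (u : ZMod (4*n)) (k : ℕ) :
    res4 n (u + (k : ℕ)) = res4 n u + (k : ZMod 4) := by
  rw [res4_add, res4_natCast]

lemma SS_add4 (u : ZMod (4*n)) : SS n u (u + ((4 : ℕ) : ZMod (4*n))) := by
  have h : res4 n (u + ((4:ℕ) : ZMod (4*n))) = res4 n u := by
    rw [res4_add_nat, (by decide : ((4:ℕ) : ZMod 4) = 0), add_zero]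
  rcases memX_or_memY (n := n) u with hX | hY
  · exact Or.inl ⟨hX, by rcases hX with h0 | h0 <;> [exact Or.inl (by rw [h, h0]); exact Or.inr (by rw [h, h0])]⟩
  · exact Or.inr ⟨hY, by rcases hY with h0 | h0 <;> [exact Or.inl (by rw [h, h0]); exact Or.inr (by rw [h, h0])]⟩

section Tri
variable (hn : 3 ≤ n)
include hn

/-- Two same-side vertices have a common neighbor on the same side. -/
lemma exists_common {u v : ZMod (4*n)} (hS : SS n u v) (hne : u ≠ v) :
    ∃ w, (H4 n).Adj u w ∧ (H4 n).Adj v w ∧ SS n u w := by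
  classical
  -- generic builder
  have key : ∀ w : ZMod (4*n), SS n u w → w ≠ u → w ≠ pp n u → w ≠ v → w ≠ pp n v →
      (H4 n).Adj u w ∧ (H4 n).Adj v w ∧ SS n u w := by
    intro w hSw hwu hwp hwv hwpv
    have hSvw : SS n v w := SS_trans (SS_symm hS) hSw
    exact ⟨(adj_same hSw (Ne.symm hwu)).mpr hwp,
      (adj_same hSvw (Ne.symm hwv)).mpr hwpv, hSw⟩
  -- candidates
  set c1 := u + ((4:ℕ) : ZMod (4*n)) with hc1
  set c2 := u + ((8:ℕ) : ZMod (4*n)) with hc2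
  set c3 := pp n u + ((4:ℕ) : ZMod (4*n)) with hc3
  have hS1 : SS n u c1 := SS_add4 u
  have hS2 : SS n u c2 := by
    have : c2 = c1 + ((4:ℕ) : ZMod (4*n)) := by rw [hc1, hc2]; push_cast; ring
    rw [this]; exact SS_trans hS1 (SS_add4 c1)
  have hS3 : SS n u c3 := SS_trans (SS_pp u) (SS_add4 (pp n u))
  have hpu := res4_pp (n := n) u
  have hpv := res4_pp (n := n) v
  -- distinctness facts
  have d1u : c1 ≠ u := by
    exact diff_ne hn 4 (by norm_num) (by norm_num) (by rw [hc1]; ring)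
  have d2u : c2 ≠ u := by
    exact diff_ne hn 8 (by norm_num) (by norm_num) (by rw [hc2]; ring)
  have d3u : c3 ≠ u := by
    rcases hpu with ⟨_, h'⟩ | ⟨_, h'⟩ | ⟨_, h'⟩ | ⟨_, h'⟩ <;> rw [hc3, h']
    · exact diff_ne hn 5 (by norm_num) (by norm_num) (by push_cast; ring)
    · exact diff_ne hn 3 (by norm_num) (by norm_num) (by push_cast; ring)
    · exact diff_ne hn 5 (by norm_num) (by norm_num) (by push_cast; ring)
    · exact diff_ne hn 3 (by norm_num) (by norm_num) (by push_cast; ring)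
  have d1p : c1 ≠ pp n u := by
    rcases hpu with ⟨_, h'⟩ | ⟨_, h'⟩ | ⟨_, h'⟩ | ⟨_, h'⟩ <;> rw [hc1, h']
    · exact diff_ne hn 3 (by norm_num) (by norm_num) (by push_cast; ring)
    · exact diff_ne hn 5 (by norm_num) (by norm_num) (by push_cast; ring)
    · exact diff_ne hn 3 (by norm_num) (by norm_num) (by push_cast; ring)
    · exact diff_ne hn 5 (by norm_num) (by norm_num) (by push_cast; ring)
  have d2p : c2 ≠ pp n u := by
    rcases hpu with ⟨_, h'⟩ | ⟨_, h'⟩ | ⟨_, h'⟩ | ⟨_, h'⟩ <;> rw [hc2, h']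
    · exact diff_ne hn 7 (by norm_num) (by norm_num) (by push_cast; ring)
    · exact diff_ne hn 9 (by norm_num) (by norm_num) (by push_cast; ring)
    · exact diff_ne hn 7 (by norm_num) (by norm_num) (by push_cast; ring)
    · exact diff_ne hn 9 (by norm_num) (by norm_num) (by push_cast; ring)
  have d3p : c3 ≠ pp n u := by
    exact diff_ne hn 4 (by norm_num) (by norm_num) (by rw [hc3]; ring)
  have d12 : c1 ≠ c2 := by
    exact (diff_ne hn 4 (by norm_num) (by norm_num)
      (by rw [hc1, hc2]; push_cast; ring) : c2 ≠ c1).symm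
  have d13 : c1 ≠ c3 := by
    rcases hpu with ⟨_, h'⟩ | ⟨_, h'⟩ | ⟨_, h'⟩ | ⟨_, h'⟩ <;> rw [hc1, hc3, h']
    · exact (diff_ne hn 1 (by norm_num) (by norm_num) (by push_cast; ring)).symm
    · exact diff_ne hn 1 (by norm_num) (by norm_num) (by push_cast; ring)
    · exact (diff_ne hn 1 (by norm_num) (by norm_num) (by push_cast; ring)).symm
    · exact diff_ne hn 1 (by norm_num) (by norm_num) (by push_cast; ring)
  have d23 : c2 ≠ c3 := by
    rcases hpu with ⟨_, h'⟩ | ⟨_, h'⟩ | ⟨_, h'⟩ | ⟨_, h'⟩ <;> rw [hc2, hc3, h']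
    · exact diff_ne hn 3 (by norm_num) (by norm_num) (by push_cast; ring)
    · exact diff_ne hn 5 (by norm_num) (by norm_num) (by push_cast; ring)
    · exact diff_ne hn 3 (by norm_num) (by norm_num) (by push_cast; ring)
    · exact diff_ne hn 5 (by norm_num) (by norm_num) (by push_cast; ring)
  -- pigeonhole over the forbidden set {v, pp n v}
  by_cases h1v : c1 = v
  · by_cases h2pv : c2 = pp n v
    · exact ⟨c3, key c3 hS3 d3u d3p (fun h => d13 (h1v.trans h.symm))
        (fun h => d23 (h2pv.trans h.symm))⟩
    · by_cases h2v : c2 = v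
      · exact absurd (h2v.trans h1v.symm) d12.symm
      · exact ⟨c2, key c2 hS2 d2u d2p h2v h2pv⟩
  · by_cases h1pv : c1 = pp n v
    · by_cases h2v : c2 = v
      · exact ⟨c3, key c3 hS3 d3u d3p (fun h => d23 (h2v.trans h.symm))
          (fun h => d13 (h1pv.trans h.symm))⟩
      · by_cases h2pv : c2 = pp n v
        · exact absurd (h2pv.trans h1pv.symm) d12.symm
        · exact ⟨c2, key c2 hS2 d2u d2p h2v h2pv⟩
    · exact ⟨c1, key c1 hS1 d1u d1p h1v h1pv⟩

end Tri

/-! ### the ±2-shift `cc ∘ pp` -/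

/-- One step of the alternating partner/cross walk. -/
def gstep (n : ℕ) (u : ZMod (4*n)) : ZMod (4*n) := cc n (pp n u)

lemma gstep_even {u : ZMod (4*n)} (h : res4 n u = 0 ∨ res4 n u = 2) :
    gstep n u = u + 1 + 1 := by
  unfold gstep
  rcases h with h | h
  · rw [(res4_pp u).resolve_right (by rw [h]; rintro (⟨h', _⟩ | ⟨h', _⟩ | ⟨h', _⟩) <;> exact absurd h' (by decide)) |>.2]
    have h1 : res4 n (u + 1) = 1 := by rw [res4_add_one, h]; decide
    unfold cc; rw [if_pos (Or.inl h1)]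
  · have hp : pp n u = u + 1 := by unfold pp; rw [if_pos (Or.inr h)]
    rw [hp]
    have h1 : res4 n (u + 1) = 3 := by rw [res4_add_one, h]; decide
    unfold cc; rw [if_pos (Or.inr h1)]

lemma gstep_odd {u : ZMod (4*n)} (h : res4 n u = 1 ∨ res4 n u = 3) :
    gstep n u = u - 1 - 1 := by
  unfold gstep
  have hp : pp n u = u - 1 := by
    unfold pp; rw [if_neg (by rcases h with h | h <;> rw [h] <;> decide)]
  rw [hp]
  rcases h with h | h
  · have h1 : res4 n (u - 1) = 0 := by rw [res4_sub_one, h]; decide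
    unfold cc; rw [if_neg (by rw [h1]; decide)]
  · have h1 : res4 n (u - 1) = 2 := by rw [res4_sub_one, h]; decide
    unfold cc; rw [if_neg (by rw [h1]; decide)]

lemma two_mul_cases (k : ℕ) : ((2*k : ℕ) : ZMod 4) = 0 ∨ ((2*k : ℕ) : ZMod 4) = 2 := by
  have h : ∀ r : ZMod 4, 2 * r = 0 ∨ 2 * r = 2 := by decide
  push_cast
  exact h _

lemma gstep_iter_even {x : ZMod (4*n)} (h : res4 n x = 0 ∨ res4 n x = 2) (k : ℕ) :
    (gstep n)^[k] x = x + ((2*k : ℕ) : ZMod (4*n)) := by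
  induction k with
  | zero => simp
  | succ k ih =>
    have hres : res4 n (x + ((2*k : ℕ) : ZMod (4*n))) = 0 ∨
        res4 n (x + ((2*k : ℕ) : ZMod (4*n))) = 2 := by
      rw [res4_add_nat]
      rcases h with h | h <;> rcases two_mul_cases k with h2 | h2 <;>
        rw [h, h2] <;> [left; right; right; left] <;> decide
    rw [Function.iterate_succ_apply', ih, gstep_even hres]
    push_cast; ring

lemma gstep_iter_odd {x : ZMod (4*n)} (h : res4 n x = 1 ∨ res4 n x = 3) (k : ℕ) :
    (gstep n)^[k] x = x - ((2*k : ℕ) : ZMod (4*n)) := by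
  induction k with
  | zero => simp
  | succ k ih =>
    have hres : res4 n (x - ((2*k : ℕ) : ZMod (4*n))) = 1 ∨
        res4 n (x - ((2*k : ℕ) : ZMod (4*n))) = 3 := by
      rw [res4_sub, res4_natCast]
      rcases h with h | h <;> rcases two_mul_cases k with h2 | h2 <;>
        rw [h, h2] <;> [left; right; right; left] <;> decide
    rw [Function.iterate_succ_apply', ih, gstep_odd hres]
    push_cast; ring

end H4Aux

open H4Aux

/-- For all `n, m ≥ 3` with `n ≠ m`, the graph `H_{4n}` is not an induced subgraph of
`H_{4m}`: the graphs `H_{4n}` form an infinite antichain with respect to the induced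
subgraph relation. -/
theorem H4_antichain (n m : ℕ) (hn : 3 ≤ n) (hm : 3 ≤ m) (hnm : n ≠ m) :
    IsEmpty (H4 n ↪g H4 m) := by
  constructor
  intro f
  haveI : NeZero (4*n) := ⟨by omega⟩
  haveI : NeZero (4*m) := ⟨by omega⟩
  -- if n > m there is no injection at all
  rcases lt_or_gt_of_ne hnm with hlt | hgt
  swap
  · have hcard := Fintype.card_le_of_injective f f.injective
    rw [ZMod.card, ZMod.card] at hcard
    omega
  -- main case : n < m
  -- adjacent same-side pairs map to same-side pairs
  have hB' : ∀ u v : ZMod (4*n), SS n u v → (H4 n).Adj u v → SS m (f u) (f v) := by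
    intro u v hS hA
    by_contra hX
    obtain ⟨w, huw, hvw, -⟩ := exists_common hn hS ((H4 n).ne_of_adj hA)
    exact cross_no_triangle hX (f.map_adj_iff.mpr hA)
      (f.map_adj_iff.mpr huw) (f.map_adj_iff.mpr hvw)
  -- all same-side pairs map to same-side pairs
  have hB : ∀ u v : ZMod (4*n), SS n u v → SS m (f u) (f v) := by
    intro u v hS
    by_cases hne : u = v
    · subst hne; exact SS_refl _
    obtain ⟨w, huw, hvw, huwS⟩ := exists_common hn hS hne
    have h1 : SS m (f u) (f w) := hB' u w huwS huw
    have h2 : SS m (f v) (f w) := hB' v w (SS_trans (SS_symm hS) huwS) hvw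
    exact SS_trans h1 (SS_symm h2)
  -- basic facts about 0, 1, 2 in ZMod (4n)
  have hr0 : res4 n (0 : ZMod (4*n)) = 0 := res4_zero
  have hr1 : res4 n (1 : ZMod (4*n)) = 1 := res4_one
  have hr2 : res4 n (2 : ZMod (4*n)) = 2 := res4_two
  have h01 : SS n 0 1 := Or.inl ⟨memX_res0 hr0, memX_res1 hr1⟩
  have h02 : ¬ SS n 0 2 := crossSS (Or.inl ⟨memX_res0 hr0, memY_res2 hr2⟩)
  have hne01 : (0 : ZMod (4*n)) ≠ 1 :=
    fun h => natCast_ne_zero hn (k := 1) one_pos (by norm_num) (by push_cast; rw [← h])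
  have hne02 : (0 : ZMod (4*n)) ≠ 2 :=
    fun h => natCast_ne_zero hn (k := 2) (by norm_num) (by norm_num) (by push_cast; rw [← h])
  have hne12 : (1 : ZMod (4*n)) ≠ 2 :=
    fun h => natCast_ne_zero hn (k := 1) one_pos (by norm_num)
      (by push_cast; linear_combination -h)
  have hpp0 : pp n (0 : ZMod (4*n)) = 1 := by
    unfold pp; rw [if_pos (Or.inl hr0)]; ring
  have hna01 : ¬ (H4 n).Adj 0 1 := by
    rw [adj_same h01 hne01, hpp0]; simp
  have hna02 : ¬ (H4 n).Adj 0 2 := by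
    rw [adj_cross h02]
    have hcc0 : cc n (0 : ZMod (4*n)) = -1 := by
      unfold cc; rw [if_neg (by rw [hr0]; decide)]; ring
    rw [hcc0]
    intro h
    exact natCast_ne_zero hn (k := 3) (by norm_num) (by norm_num)
      (by push_cast; linear_combination h)
  -- X and Y map to different sides
  have hD : ¬ SS m (f 0) (f 2) := by
    intro hS2
    have h1 : SS m (f 0) (f 1) := hB 0 1 h01
    have e1 : f 1 = pp m (f 0) := same_nonadj h1 (fun h => hne01 (f.injective h))
      (fun h => hna01 (f.map_adj_iff.mp h))
    have e2 : f 2 = pp m (f 0) := same_nonadj hS2 (fun h => hne02 (f.injective h))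
      (fun h => hna02 (f.map_adj_iff.mp h))
    exact hne12 (f.injective (e1.trans e2.symm))
  -- cross pairs map to cross pairs
  have hCross : ∀ u v : ZMod (4*n), ¬ SS n u v → ¬ SS m (f u) (f v) := by
    intro u v h hS'
    rcases not_SS h with ⟨hXu, hYv⟩ | ⟨hYu, hXv⟩
    · have hu0 : SS n u 0 := Or.inl ⟨hXu, memX_res0 hr0⟩
      have hv2 : SS n v 2 := Or.inr ⟨hYv, memY_res2 hr2⟩
      exact hD (SS_trans (SS_symm (hB u 0 hu0)) (SS_trans hS' (hB v 2 hv2)))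
    · have hu2 : SS n u 2 := Or.inr ⟨hYu, memY_res2 hr2⟩
      have hv0 : SS n v 0 := Or.inl ⟨hXv, memX_res0 hr0⟩
      exact hD (SS_trans (SS_symm (hB v 0 hv0)) (SS_trans (SS_symm hS') (hB u 2 hu2)))
  -- f commutes with pp
  have hpf : ∀ u : ZMod (4*n), f (pp n u) = pp m (f u) := by
    intro u
    have hS : SS n u (pp n u) := SS_pp u
    have hne : u ≠ pp n u := (pp_ne hn u).symm
    have hna : ¬ (H4 n).Adj u (pp n u) := by
      rw [adj_same hS hne]; simp
    exact same_nonadj (hB u (pp n u) hS) (fun h => hne (f.injective h))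
      (fun h => hna (f.map_adj_iff.mp h))
  -- f commutes with cc
  have hcf : ∀ u : ZMod (4*n), f (cc n u) = cc m (f u) := by
    intro u
    have hA : (H4 n).Adj u (cc n u) := (adj_cross (not_SS_cc u)).mpr rfl
    exact (adj_cross (hCross u (cc n u) (not_SS_cc u))).mp (f.map_adj_iff.mpr hA)
  -- f commutes with gstep
  have hgf : ∀ (k : ℕ) (u : ZMod (4*n)), f ((gstep n)^[k] u) = (gstep m)^[k] (f u) := by
    intro k
    induction k with
    | zero => intro u; simp
    | succ k ih =>
      intro u
      rw [Function.iterate_succ_apply, Function.iterate_succ_apply, ih]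
      congr 1
      unfold gstep
      rw [hcf, hpf]
  -- iterate 2n times starting from 0
  have hn_side : (gstep n)^[2*n] (0 : ZMod (4*n)) = 0 := by
    rw [gstep_iter_even (Or.inl hr0) (2*n)]
    have : ((2*(2*n) : ℕ) : ZMod (4*n)) = 0 := by
      have h4 : 2*(2*n) = 4*n := by ring
      rw [h4, ZMod.natCast_self]
    rw [this, add_zero]
  have hm_side : f 0 = (gstep m)^[2*n] (f 0) := by
    conv_lhs => rw [← hn_side, hgf]
  have hdvd : ((2*(2*n) : ℕ) : ZMod (4*m)) = 0 := by
    rcases res_cases (res4 m (f 0)) with h | h | h | h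
    · rw [gstep_iter_even (Or.inl h) (2*n)] at hm_side
      linear_combination -hm_side
    · rw [gstep_iter_odd (Or.inl h) (2*n)] at hm_side
      linear_combination hm_side
    · rw [gstep_iter_even (Or.inr h) (2*n)] at hm_side
      linear_combination -hm_side
    · rw [gstep_iter_odd (Or.inr h) (2*n)] at hm_side
      linear_combination hm_side
  rw [ZMod.natCast_eq_zero_iff] at hdvd
  have := Nat.le_of_dvd (by omega) hdvd
  omega
end
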